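/- Let γ be the standard Gaussian measure on ℝ, a ≥ 1, f_a(t) = e^{at/2}, and N(x) = x² log(1+x²). Then the Luxembourg norm satisfies ‖f_a‖_N ≤ √2 · a · e^{a²/4} (with respect to γ). -/

import Mathlib

open MeasureTheory ProbabilityTheory

noncomputable def luxNorm {α : Type*} [MeasurableSpace α] (μ : Measure α)
    (Φ : ℝ → ℝ) (f : α → ℝ) : ℝ :=
  sInf {l : ℝ | 0 < l ∧ ∫ x, Φ (|f x| / l) ∂μ ≤ 1}

noncomputable def Nfun (x : ℝ) : ℝ := x ^ 2 * Real.log (1 + x ^ 2)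

/-!
Put `λ = a e^{a²/4}`. The pointwise bounds `N(x/√2) ≤ N(x)/2` and `N(x) ≤ 1 + x² log x²` give
`∫ N(f_a/(√2 λ)) dγ ≤ (1 + ∫ (f_a/λ)² log (f_a/λ)² dγ) / 2`. As `f_a² = e^{at}`, the last integral
comes from the Gaussian moment generating function and its derivative,
`∫ e^{at} dγ = e^{a²/2}` and `∫ t e^{at} dγ = a e^{a²/2}`: it equals `1 - 2 log λ / a²` because
`λ² = a² e^{a²/2}`, and this is at most `1` since `λ ≥ 1`.
-/

open Real
open scoped NNReal

section GaussianMoments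

variable {μ : ℝ} {v : ℝ≥0}

lemma integral_exp_mul_gaussianReal (t : ℝ) :
    ∫ x, exp (t * x) ∂gaussianReal μ v = exp (μ * t + v * t ^ 2 / 2) :=
  congrFun mgf_fun_id_gaussianReal t

lemma integrable_mul_exp_mul_gaussianReal (t : ℝ) :
    Integrable (fun x ↦ x * exp (t * x)) (gaussianReal μ v) := by
  simpa using integrable_pow_mul_exp_of_mem_interior_integrableExpSet
    (X := fun x ↦ x) (μ := gaussianReal μ v) (by simp) 1

lemma integral_mul_exp_mul_gaussianReal (t : ℝ) :
    ∫ x, x * exp (t * x) ∂gaussianReal μ v = (μ + v * t) * exp (μ * t + v * t ^ 2 / 2) := by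
  have hmgf := hasDerivAt_mgf (X := fun x ↦ x) (μ := gaussianReal μ v) (t := t) (by simp)
  rw [mgf_fun_id_gaussianReal] at hmgf
  have hexponent : HasDerivAt (fun s ↦ μ * s + v * s ^ 2 / 2) (μ + v * t) t :=
    (((hasDerivAt_id' t).const_mul μ).fun_add
      (((hasDerivAt_pow 2 t).const_mul (v : ℝ)).div_const 2)).congr_deriv (by ring)
  rw [mul_comm]
  exact hmgf.unique hexponent.exp

end GaussianMoments

lemma exp_half_div_sq_mul_log_sq (a l x : ℝ) (hl : l ≠ 0) :
    (exp (a * x / 2) / l) ^ 2 * log ((exp (a * x / 2) / l) ^ 2)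
      = (a * (x * exp (a * x)) - 2 * log l * exp (a * x)) / l ^ 2 := by
  have hsq : (exp (a * x / 2) / l) ^ 2 = exp (a * x) / l ^ 2 := by
    rw [div_pow, ← exp_nat_mul]; ring_nf
  rw [hsq, log_div (exp_ne_zero _) (pow_ne_zero 2 hl), log_exp, log_pow]
  ring

lemma integrable_exp_half_div_sq_mul_log_sq_gaussianReal (a : ℝ) {l : ℝ} (hl : l ≠ 0) :
    Integrable (fun x ↦ (exp (a * x / 2) / l) ^ 2 * log ((exp (a * x / 2) / l) ^ 2))
      (gaussianReal 0 1) := by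
  simp_rw [exp_half_div_sq_mul_log_sq a l _ hl]
  exact (((integrable_mul_exp_mul_gaussianReal a).const_mul a).sub
    ((integrable_exp_mul_gaussianReal a).const_mul _)).div_const _

lemma integral_exp_half_div_sq_mul_log_sq_gaussianReal (a : ℝ) {l : ℝ} (hl : l ≠ 0) :
    ∫ x, (exp (a * x / 2) / l) ^ 2 * log ((exp (a * x / 2) / l) ^ 2) ∂gaussianReal 0 1
      = exp (a ^ 2 / 2) * (a ^ 2 - 2 * log l) / l ^ 2 := by
  simp_rw [exp_half_div_sq_mul_log_sq a l _ hl]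
  rw [integral_div, integral_sub ((integrable_mul_exp_mul_gaussianReal a).const_mul a)
    ((integrable_exp_mul_gaussianReal a).const_mul _), integral_const_mul, integral_const_mul,
    integral_mul_exp_mul_gaussianReal, integral_exp_mul_gaussianReal]
  push_cast
  ring_nf

lemma mul_log_one_add_le {v : ℝ} (hv : 0 ≤ v) : v * log (1 + v) ≤ 1 + v * log v := by
  rcases hv.eq_or_lt with rfl | hv
  · simp
  have hlog : log (1 + v) - log v ≤ v⁻¹ := by
    rw [← log_div (by positivity) hv.ne', add_div, div_self hv.ne', one_div]
    linarith [log_le_sub_one_of_pos (by positivity : 0 < v⁻¹ + 1)]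
  have := mul_le_mul_of_nonneg_left hlog hv.le
  rw [mul_sub, mul_inv_cancel₀ hv.ne'] at this
  linarith

lemma Nfun_nonneg (x : ℝ) : 0 ≤ Nfun x :=
  mul_nonneg (sq_nonneg x) (log_nonneg (le_add_of_nonneg_right (sq_nonneg x)))

lemma Nfun_le_one_add_sq_mul_log (x : ℝ) : Nfun x ≤ 1 + x ^ 2 * log (x ^ 2) :=
  mul_log_one_add_le (sq_nonneg x)

lemma Nfun_div_sqrt_two_le (x : ℝ) : Nfun (x / √2) ≤ Nfun x / 2 := by
  have hsq : (x / √2) ^ 2 = x ^ 2 / 2 := by rw [div_pow, Real.sq_sqrt zero_le_two]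
  have hlog : log (1 + x ^ 2 / 2) ≤ log (1 + x ^ 2) :=
    log_le_log (by positivity) (by linarith [sq_nonneg x])
  rw [Nfun, Nfun, hsq]
  nlinarith [sq_nonneg x]

lemma luxNorm_le_of_integral_le {α : Type*} [MeasurableSpace α] {μ : Measure α} {Φ : ℝ → ℝ}
    {f : α → ℝ} {l : ℝ} (hl : 0 < l) (h : ∫ x, Φ (|f x| / l) ∂μ ≤ 1) : luxNorm μ Φ f ≤ l :=
  csInf_le ⟨0, fun _ hk ↦ hk.1.le⟩ ⟨hl, h⟩

lemma luxNorm_Nfun_le_sqrt_two_mul {α : Type*} [MeasurableSpace α] {μ : Measure α}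
    [IsProbabilityMeasure μ] {f : α → ℝ} {l : ℝ} (hl : 0 < l)
    (hint : Integrable (fun x ↦ (f x / l) ^ 2 * log ((f x / l) ^ 2)) μ)
    (hent : ∫ x, (f x / l) ^ 2 * log ((f x / l) ^ 2) ∂μ ≤ 1) :
    luxNorm μ Nfun f ≤ √2 * l := by
  refine luxNorm_le_of_integral_le (by positivity) ?_
  have hpt (x : α) :
      Nfun (|f x| / (√2 * l)) ≤ (1 + (f x / l) ^ 2 * log ((f x / l) ^ 2)) / 2 := by
    have h := Nfun_le_one_add_sq_mul_log (|f x| / l)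
    rw [div_pow, sq_abs, ← div_pow] at h
    calc Nfun (|f x| / (√2 * l)) = Nfun (|f x| / l / √2) := by rw [div_div, mul_comm l]
      _ ≤ Nfun (|f x| / l) / 2 := Nfun_div_sqrt_two_le _
      _ ≤ _ := by linarith
  calc ∫ x, Nfun (|f x| / (√2 * l)) ∂μ
      ≤ ∫ x, (1 + (f x / l) ^ 2 * log ((f x / l) ^ 2)) / 2 ∂μ :=
        integral_mono_of_nonneg (.of_forall fun _ ↦ Nfun_nonneg _)
          (((integrable_const 1).add hint).div_const 2) (.of_forall hpt)
    _ = (1 + ∫ x, (f x / l) ^ 2 * log ((f x / l) ^ 2) ∂μ) / 2 := by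
        rw [integral_div, integral_add (integrable_const 1) hint, integral_const, probReal_univ,
          one_smul]
    _ ≤ 1 := by linarith

/-- For f_a(t)=e^{at/2} and the standard Gaussian, ‖f_a‖_N ≤ √2·a·e^{a²/4}. -/
theorem luxNorm_N_exponential (a : ℝ) (ha : 1 ≤ a) :
    luxNorm (gaussianReal 0 1) Nfun (fun t => Real.exp (a * t / 2))
      ≤ Real.sqrt 2 * a * Real.exp (a ^ 2 / 4) := by
  set l := a * exp (a ^ 2 / 4)
  have hl : 1 ≤ l := one_le_mul_of_one_le_of_one_le ha (one_le_exp (by positivity))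
  have hl_sq : l ^ 2 = a ^ 2 * exp (a ^ 2 / 2) := by
    rw [mul_pow, ← exp_nat_mul]; ring_nf
  rw [mul_assoc]
  have hl_pos : 0 < l := zero_lt_one.trans_le hl
  refine luxNorm_Nfun_le_sqrt_two_mul hl_pos
    (integrable_exp_half_div_sq_mul_log_sq_gaussianReal a hl_pos.ne') ?_
  rw [integral_exp_half_div_sq_mul_log_sq_gaussianReal a hl_pos.ne', hl_sq,
    div_le_one (by positivity)]
  have : 0 ≤ exp (a ^ 2 / 2) * log l := mul_nonneg (exp_pos _).le (log_nonneg hl)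
  linarith
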